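/- arXiv:1509.02485 — 6 statements merged into one kernel-verified Lean document; each statement's English description precedes it below -/
import Mathlib

section
/- Let G = (V,E) be a finite simple graph, V' ⊆ V, ρ : V' → ℕ a precoloring, and ≺ a linear order on V consistent with ρ. For v ∈ V' let rep(v) be the ≺-least element of ρ_{ρ(v)}. Let PREEXT≺(G,ρ) be the convex hull of the representative vectors of proper colorings of G whose representative vector x satisfies x_{(rep(v),v)} = 1 for every v ∈ V' with rep(v) ≠ v, and let Q = {x ∈ ℝ^A : x_{(rep(v),v)} = 1 for all v ∈ V' with rep(v) ≠ v}. Then PREEXT≺(G,ρ) = COL≺(G) ∩ Q. -/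
open scoped Classical

/-- `(u, v)` is an arc of `G` w.r.t. the order `lt`: `u ≺ v` and `uv ∉ E`. -/
abbrev IsArcPair {V : Type*} (G : SimpleGraph V) (lt : V → V → Prop) (p : V × V) : Prop :=
  lt p.1 p.2 ∧ ¬ G.Adj p.1 p.2

/-- The set of arcs of `G` (ordered non-edges), as a type. -/
abbrev Arc {V : Type*} (G : SimpleGraph V) (lt : V → V → Prop) : Type _ :=
  {p : V × V // IsArcPair G lt p}

/-- A proper coloring of a graph, as a color function. -/
def ProperColoring {W : Type*} (H : SimpleGraph W) (c : W → ℕ) : Prop :=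
  ∀ u v, H.Adj u v → c u ≠ c v

/-- `u` is the `lt`-least element of its color class under `c`. -/
def IsClassRep {V : Type*} (lt : V → V → Prop) (c : V → ℕ) (u : V) : Prop :=
  ∀ w, c w = c u → u = w ∨ lt u w

/-- The representative vector of a coloring `c`: `x (u,v) = 1` iff `u` and `v` have the
same color and `u` is the `lt`-least element of that color class. -/
noncomputable def repVec {V : Type*} (G : SimpleGraph V) (lt : V → V → Prop) (c : V → ℕ) :
    Arc G lt → ℝ := fun a =>
  if c a.1.1 = c a.1.2 ∧ IsClassRep lt c a.1.1 then 1 else 0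

/-- The coloring polytope: convex hull of representative vectors of proper colorings. -/
noncomputable def COL {V : Type*} (G : SimpleGraph V) (lt : V → V → Prop) :
    Set (Arc G lt → ℝ) :=
  convexHull ℝ {x | ∃ c : V → ℕ, ProperColoring G c ∧ x = repVec G lt c}

/-- A stable (independent) set of a graph. -/
def IsStableSet {W : Type*} (H : SimpleGraph W) (s : Set W) : Prop :=
  ∀ a ∈ s, ∀ b ∈ s, ¬ H.Adj a b

/-- The stable set polytope of a graph. -/
noncomputable def STAB {W : Type*} (H : SimpleGraph W) : Set (W → ℝ) :=
  convexHull ℝ {x | ∃ s : Set W, IsStableSet H s ∧ x = s.indicator 1}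

/-- The Cornaz–Jost graph `R≺(G)`: vertices are the arcs of `G`; two distinct arcs
`(a,b)` and `(c,d)` are adjacent iff they share an endpoint and it is not the case that
`a = c` and `bd ∉ E`. -/
def RGraph {V : Type*} (G : SimpleGraph V) (lt : V → V → Prop) : SimpleGraph (Arc G lt) where
  Adj p q := p ≠ q ∧
    (p.1.1 = q.1.1 ∨ p.1.1 = q.1.2 ∨ p.1.2 = q.1.1 ∨ p.1.2 = q.1.2) ∧
    ¬ (p.1.1 = q.1.1 ∧ ¬ G.Adj p.1.2 q.1.2)
  symm := by
    constructor
    rintro p q ⟨h1, h2, h3⟩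
    refine ⟨h1.symm, ?_, fun hc => h3 ⟨hc.1.symm, fun h => hc.2 (G.adj_symm h)⟩⟩
    rcases h2 with h | h | h | h
    · exact Or.inl h.symm
    · exact Or.inr (Or.inr (Or.inl h.symm))
    · exact Or.inr (Or.inl h.symm)
    · exact Or.inr (Or.inr (Or.inr h.symm))
  loopless := ⟨fun p h => h.1 rfl⟩

/-- The line graph of the complement of `G`, with the edges of the complement
identified with the arcs of `G`: two distinct arcs are adjacent iff they share an endpoint. -/
def lineGraphArc {V : Type*} (G : SimpleGraph V) (lt : V → V → Prop) :
    SimpleGraph (Arc G lt) where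
  Adj p q := p ≠ q ∧
    (p.1.1 = q.1.1 ∨ p.1.1 = q.1.2 ∨ p.1.2 = q.1.1 ∨ p.1.2 = q.1.2)
  symm := by
    constructor
    rintro p q ⟨h1, h2⟩
    refine ⟨h1.symm, ?_⟩
    rcases h2 with h | h | h | h
    · exact Or.inl h.symm
    · exact Or.inr (Or.inr (Or.inl h.symm))
    · exact Or.inr (Or.inl h.symm)
    · exact Or.inr (Or.inr (Or.inr h.symm))
  loopless := ⟨fun p h => h.1 rfl⟩

/-- The independence number of `H` is at most 2. -/
def AlphaLeTwo {W : Type*} (H : SimpleGraph W) : Prop :=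
  ∀ s : Set W, IsStableSet H s → s.ncard ≤ 2

/-- The chromatic number of a graph, as a natural number. -/
noncomputable def chromNum {W : Type*} (H : SimpleGraph W) : ℕ :=
  sInf {n : ℕ | ∃ c : W → ℕ, ProperColoring H c ∧ ∀ v, c v < n}

/-- `H` contains a copy of `F` as a (not necessarily induced) subgraph. -/
def ContainsCopy {α β : Type*} (F : SimpleGraph α) (H : SimpleGraph β) : Prop :=
  ∃ f : α → β, Function.Injective f ∧ ∀ a b, F.Adj a b → H.Adj (f a) (f b)

/-- `H` contains an induced copy of `F`. -/
def ContainsInducedCopy {α β : Type*} (F : SimpleGraph α) (H : SimpleGraph β) : Prop :=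
  ∃ f : α → β, Function.Injective f ∧ ∀ a b, H.Adj (f a) (f b) ↔ F.Adj a b

/-- The paw: a triangle `{0,1,2}` plus the vertex `3` adjacent only to `2`. -/
def pawGraph : SimpleGraph (Fin 4) :=
  SimpleGraph.fromEdgeSet {s(0, 1), s(0, 2), s(1, 2), s(2, 3)}

/-- The kite: the paw plus the vertex `4` adjacent only to `3` (the paw's degree-1 vertex). -/
def kiteGraph : SimpleGraph (Fin 5) :=
  SimpleGraph.fromEdgeSet {s(0, 1), s(0, 2), s(1, 2), s(2, 3), s(3, 4)}

/-- The claw `K_{1,3}`: vertex `0` adjacent to `1`, `2`, `3`. -/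
def clawGraph : SimpleGraph (Fin 4) :=
  SimpleGraph.fromEdgeSet {s(0, 1), s(0, 2), s(0, 3)}

/-- A graph is claw-free if it has no induced copy of `K_{1,3}`. -/
def ClawFree {W : Type*} (H : SimpleGraph W) : Prop :=
  ¬ ContainsInducedCopy clawGraph H

/-- A graph is quasi-line if the neighborhood of every vertex can be partitioned
into two cliques. -/
def QuasiLine {W : Type*} (H : SimpleGraph W) : Prop :=
  ∀ v : W, ∃ K₁ K₂ : Set W, Disjoint K₁ K₂ ∧ K₁ ∪ K₂ = {w | H.Adj v w} ∧
    H.IsClique K₁ ∧ H.IsClique K₂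

/-- A graph is hypomatchable if deleting any vertex leaves a graph with a perfect matching. -/
def Hypomatchable {W : Type*} (H : SimpleGraph W) : Prop :=
  ∀ u : W, ∃ M : (H.induce {v | v ≠ u}).Subgraph, M.IsPerfectMatching

/-- A graph is 2-connected: connected, at least 3 vertices, and deleting any vertex
leaves it connected. -/
def TwoConnected {W : Type*} [Fintype W] (H : SimpleGraph W) : Prop :=
  H.Connected ∧ 3 ≤ Fintype.card W ∧ ∀ u : W, (H.induce {v | v ≠ u}).Connected

/-- A set of arcs is a matching of the complement of `G`: no two distinct arcs share
an endpoint. -/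
def IsMatchingArcSet {V : Type*} (G : SimpleGraph V) (lt : V → V → Prop)
    (m : Set (Arc G lt)) : Prop :=
  ∀ p ∈ m, ∀ q ∈ m, p ≠ q →
    ¬ (p.1.1 = q.1.1 ∨ p.1.1 = q.1.2 ∨ p.1.2 = q.1.1 ∨ p.1.2 = q.1.2)

/-- The matching polytope of the complement of `G`, viewed in `ℝ^A` via the
identification of edges of the complement with arcs. -/
noncomputable def MATCHarcs {V : Type*} (G : SimpleGraph V) (lt : V → V → Prop) :
    Set (Arc G lt → ℝ) :=
  convexHull ℝ {x | ∃ m : Set (Arc G lt), IsMatchingArcSet G lt m ∧ x = m.indicator 1}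

/-- Restriction of a vector indexed by arcs of `G` to the arcs of an induced subgraph. -/
def restrictVec {V : Type*} (G : SimpleGraph V) (lt : V → V → Prop) (W : Set V)
    (x : Arc G lt → ℝ) : Arc (G.induce W) (fun a b => lt ↑a ↑b) → ℝ :=
  fun a => x ⟨(↑a.1.1, ↑a.1.2), a.2.1, a.2.2⟩

/-!
Every representative vector has all coordinates at most `1`, so each equation
`x (rep v, v) = 1` defining `Q` cuts out a face of `COL≺(G)`; and a face of the convex hull
of a set `S` cut out by inequalities valid on `S` is the convex hull of the points of `S` on it.
-/

section FaceOfConvexHull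

variable {𝕜 E ι : Type*} [Field 𝕜] [LinearOrder 𝕜] [IsStrictOrderedRing 𝕜]
  [AddCommGroup E] [Module 𝕜 E]

theorem convexHull_inter_eq_of_forall_le {S : Set E} (ℓ : ι → E →ᵃ[𝕜] 𝕜) (c : ι → 𝕜)
    (hle : ∀ i, ∀ s ∈ S, ℓ i s ≤ c i) :
    convexHull 𝕜 (S ∩ {x | ∀ i, ℓ i x = c i}) = convexHull 𝕜 S ∩ {x | ∀ i, ℓ i x = c i} := by
  set F := {x | ∀ i, ℓ i x = c i}
  have hF : Convex 𝕜 F := by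
    have : F = ⋂ i, ℓ i ⁻¹' {c i} := by ext; simp [F]
    exact this ▸ convex_iInter fun i => (convex_singleton (c i)).affine_preimage (ℓ i)
  refine subset_antisymm
    (convexHull_min (Set.inter_subset_inter_left _ (subset_convexHull 𝕜 S))
      ((convex_convexHull 𝕜 S).inter hF)) ?_
  have hle_hull : ∀ i, ∀ x ∈ convexHull 𝕜 S, ℓ i x ≤ c i := fun i =>
    convexHull_min (hle i) ((convex_Iic (c i)).affine_preimage (ℓ i))
  -- A proper convex combination of two points of the hull lies on the face only if both do,
  -- so the points of the hull that are in `convexHull 𝕜 (S ∩ F)` once they are in `F`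
  -- form a convex set.
  let D := {x ∈ convexHull 𝕜 S | x ∈ F → x ∈ convexHull 𝕜 (S ∩ F)}
  have hD : Convex 𝕜 D := by
    rintro x ⟨hxS, hxF⟩ y ⟨hyS, hyF⟩ a b ha hb hab
    refine ⟨convex_convexHull 𝕜 S hxS hyS ha hb hab, fun hF' => ?_⟩
    rcases ha.eq_or_lt with rfl | ha'
    · obtain rfl : b = 1 := by simpa using hab
      simpa using hyF (by simpa using hF')
    rcases hb.eq_or_lt with rfl | hb'
    · obtain rfl : a = 1 := by simpa using hab
      simpa using hxF (by simpa using hF')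
    have hxy : x ∈ F ∧ y ∈ F := by
      refine ⟨fun i => ?_, fun i => ?_⟩ <;>
      · have hi := hF' i
        rw [Convex.combo_affine_apply hab, smul_eq_mul, smul_eq_mul] at hi
        have hx := hle_hull i x hxS
        have hy := hle_hull i y hyS
        have hc : c i = a * c i + b * c i := by rw [← add_mul, hab, one_mul]
        nlinarith [mul_le_mul_of_nonneg_left hx ha, mul_le_mul_of_nonneg_left hy hb]
    exact convex_convexHull 𝕜 _ (hxF hxy.1) (hyF hxy.2) ha hb hab
  have hSD : S ⊆ D := fun s hs =>
    ⟨subset_convexHull 𝕜 S hs, fun hsF => subset_convexHull 𝕜 _ ⟨hs, hsF⟩⟩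
  rintro x ⟨hxS, hxF⟩
  exact (convexHull_min hSD hD hxS).2 hxF

end FaceOfConvexHull

section ForcedArcs

variable {V : Type*} (G : SimpleGraph V) (lt : V → V → Prop)

/-- Evaluation at `p`, taken to be the zero map when `p` is not an arc, so that the constraint
`arcEval G lt p x = 1` says exactly that `p` is an arc with `x p = 1`. -/
noncomputable def arcEval (p : V × V) : (Arc G lt → ℝ) →ᵃ[ℝ] ℝ :=
  if h : IsArcPair G lt p then (LinearMap.proj (R := ℝ) ⟨p, h⟩).toAffineMap else 0

theorem arcEval_eq_one_iff (p : V × V) (x : Arc G lt → ℝ) :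
    arcEval G lt p x = 1 ↔ ∃ h : IsArcPair G lt p, x ⟨p, h⟩ = 1 := by
  unfold arcEval
  split_ifs with h
  · exact ⟨fun hx => ⟨h, hx⟩, fun ⟨_, hx⟩ => hx⟩
  · simp [h]

theorem repVec_le_one (c : V → ℕ) (a : Arc G lt) : repVec G lt c a ≤ 1 := by
  unfold repVec
  split_ifs <;> norm_num

theorem arcEval_repVec_le_one (p : V × V) (c : V → ℕ) : arcEval G lt p (repVec G lt c) ≤ 1 := by
  unfold arcEval
  split_ifs
  · exact repVec_le_one G lt c _
  · norm_num

end ForcedArcs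

theorem statement2_general {V : Type*} (G : SimpleGraph V) (lt : V → V → Prop) (V' : Set V)
    (rep : V → V) :
    convexHull ℝ {x : Arc G lt → ℝ | ∃ c : V → ℕ, ProperColoring G c ∧ x = repVec G lt c ∧
        ∀ v ∈ V', rep v ≠ v →
          ∃ h : IsArcPair G lt (rep v, v), x ⟨(rep v, v), h⟩ = 1} =
      COL G lt ∩ {x : Arc G lt → ℝ | ∀ v ∈ V', rep v ≠ v →
          ∃ h : IsArcPair G lt (rep v, v), x ⟨(rep v, v), h⟩ = 1} := by
  set Q := {x : Arc G lt → ℝ | ∀ v ∈ V', rep v ≠ v →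
    ∃ h : IsArcPair G lt (rep v, v), x ⟨(rep v, v), h⟩ = 1}
  have hQ : Q = {x | ∀ v : {v // v ∈ V' ∧ rep v ≠ v}, arcEval G lt (rep v, v) x = 1} := by
    ext x
    simp [Q, arcEval_eq_one_iff]
  have hgen : {x | ∃ c : V → ℕ, ProperColoring G c ∧ x = repVec G lt c ∧ x ∈ Q} =
      {x | ∃ c : V → ℕ, ProperColoring G c ∧ x = repVec G lt c} ∩ Q :=
    Set.ext fun x => ⟨fun ⟨c, hc, hx, hQx⟩ => ⟨⟨c, hc, hx⟩, hQx⟩,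
      fun ⟨⟨c, hc, hx⟩, hQx⟩ => ⟨c, hc, hx, hQx⟩⟩
  change convexHull ℝ {x | ∃ c : V → ℕ, ProperColoring G c ∧ x = repVec G lt c ∧ x ∈ Q} = _
  rw [hgen, COL, hQ]
  refine convexHull_inter_eq_of_forall_le _ _ ?_
  rintro v _ ⟨c, -, rfl⟩
  exact arcEval_repVec_le_one G lt _ c

/-- `PREEXT≺(G,ρ) = COL≺(G) ∩ Q`. -/
theorem statement2 {V : Type*} [Fintype V] [DecidableEq V]
    (G : SimpleGraph V) [DecidableRel G.Adj]
    (lt : V → V → Prop) [DecidableRel lt] (hlt : IsStrictTotalOrder V lt)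
    (V' : Set V) (ρ : V → ℕ)
    -- `lt` is consistent with the precoloring `ρ` on `V'`:
    (hcons : ∀ w ∉ V', ∀ c : ℕ, (∃ v ∈ V', ρ v = c) → ∃ v ∈ V', ρ v = c ∧ lt v w)
    -- `rep v` is the `lt`-least element of the color class `ρ_{ρ(v)}`, for `v ∈ V'`:
    (rep : V → V)
    (hrep : ∀ v ∈ V', rep v ∈ V' ∧ ρ (rep v) = ρ v ∧
      ∀ u ∈ V', ρ u = ρ v → rep v = u ∨ lt (rep v) u) :
    convexHull ℝ {x : Arc G lt → ℝ | ∃ c : V → ℕ, ProperColoring G c ∧ x = repVec G lt c ∧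
        ∀ v ∈ V', rep v ≠ v →
          ∃ h : IsArcPair G lt (rep v, v), x ⟨(rep v, v), h⟩ = 1} =
      COL G lt ∩ {x : Arc G lt → ℝ | ∀ v ∈ V', rep v ≠ v →
          ∃ h : IsArcPair G lt (rep v, v), x ⟨(rep v, v), h⟩ = 1} :=
  statement2_general G lt V' rep
end

section
/- Let G = (V,E) be a finite simple graph and ≺ a linear order on V. For every matching M of the complement of G, the corresponding set of arcs {(u,v) : u ≺ v, uv ∈ M} is an independent set of the Cornaz–Jost graph R≺(G); consequently, the matching polytope MATCH(comp G), viewed in ℝ^A via the identification of edges of the complement with arcs, is contained in COL≺(G). -/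
open scoped Classical

/-
A matching `m` of the complement, read as arcs `(u, v)` with `u ≺ v`, is a stable set of `R≺(G)`
because `R≺(G)` is a subgraph of the line graph of the complement. For the polytope inclusion it
suffices to realise each vertex `1_m` of the matching polytope as a representative vector: colour
both ends of every arc of `m` with the colour of its tail and give every other vertex a colour of
its own. The classes are the arcs of `m` (independent, as arcs are non-edges) and singletons, and
the tail of each arc is the `≺`-least element of its class, so the representative vector is `1_m`.
-/

section

variable {V : Type*} {G : SimpleGraph V} {lt : V → V → Prop} {m : Set (Arc G lt)}

theorem IsMatchingArcSet.isStableSet_rGraph (hm : IsMatchingArcSet G lt m) :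
    IsStableSet (RGraph G lt) m :=
  fun p hp q hq hadj => hm p hp q hq hadj.1 hadj.2.1

noncomputable def matchingTail (m : Set (Arc G lt)) (v : V) : V :=
  if h : ∃ p ∈ m, p.1.2 = v then h.choose.1.1 else v

theorem matchingTail_spec (m : Set (Arc G lt)) (v : V) :
    (matchingTail m v = v ∧ ∀ p ∈ m, p.1.2 ≠ v) ∨
      ∃ p ∈ m, p.1.2 = v ∧ matchingTail m v = p.1.1 := by
  unfold matchingTail
  split_ifs with h
  · exact Or.inr ⟨h.choose, h.choose_spec.1, h.choose_spec.2, rfl⟩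
  · push Not at h
    exact Or.inl ⟨rfl, h⟩

namespace IsMatchingArcSet

variable (hm : IsMatchingArcSet G lt m)
include hm

theorem eq_of_fst_eq {p q : Arc G lt} (hp : p ∈ m) (hq : q ∈ m) (h : p.1.1 = q.1.1) :
    p = q := by
  by_contra hpq
  exact hm p hp q hq hpq (Or.inl h)

theorem eq_of_snd_eq {p q : Arc G lt} (hp : p ∈ m) (hq : q ∈ m) (h : p.1.2 = q.1.2) :
    p = q := by
  by_contra hpq
  exact hm p hp q hq hpq (Or.inr (Or.inr (Or.inr h)))

theorem snd_ne_fst [Std.Asymm lt] {p q : Arc G lt} (hp : p ∈ m) (hq : q ∈ m) :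
    p.1.2 ≠ q.1.1 := by
  intro h
  by_cases hpq : p = q
  · subst hpq
    exact asymm p.2.1 (h ▸ p.2.1)
  · exact hm p hp q hq hpq (Or.inr (Or.inr (Or.inl h)))

theorem matchingTail_snd {p : Arc G lt} (hp : p ∈ m) : matchingTail m p.1.2 = p.1.1 := by
  rcases matchingTail_spec m p.1.2 with ⟨-, hno⟩ | ⟨q, hq, hqp, hq'⟩
  · exact absurd rfl (hno p hp)
  · rw [hq', hm.eq_of_snd_eq hq hp hqp]

theorem matchingTail_fst [Std.Asymm lt] {p : Arc G lt} (hp : p ∈ m) :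
    matchingTail m p.1.1 = p.1.1 := by
  rcases matchingTail_spec m p.1.1 with ⟨h, -⟩ | ⟨q, hq, hqp, -⟩
  · exact h
  · exact absurd hqp (hm.snd_ne_fst hq hp)

theorem matchingTail_eq_iff [Std.Asymm lt] {u v : V} :
    matchingTail m u = matchingTail m v ↔
      u = v ∨ ∃ p ∈ m, (p.1.1 = u ∧ p.1.2 = v) ∨ (p.1.1 = v ∧ p.1.2 = u) := by
  constructor
  · intro h
    rcases matchingTail_spec m u with ⟨hu, -⟩ | ⟨p, hp, hpu, hu⟩ <;>
      rcases matchingTail_spec m v with ⟨hv, -⟩ | ⟨q, hq, hqv, hv⟩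
    · exact Or.inl (hu ▸ hv ▸ h)
    · exact Or.inr ⟨q, hq, Or.inl ⟨by rw [← hv, ← h, hu], hqv⟩⟩
    · exact Or.inr ⟨p, hp, Or.inr ⟨by rw [← hu, h, hv], hpu⟩⟩
    · have hpq : p = q := hm.eq_of_fst_eq hp hq (by rw [← hu, h, hv])
      exact Or.inl (hpu ▸ hqv ▸ hpq ▸ rfl)
  · rintro (rfl | ⟨p, hp, ⟨rfl, rfl⟩ | ⟨rfl, rfl⟩⟩)
    · rfl
    · rw [hm.matchingTail_fst hp, hm.matchingTail_snd hp]
    · rw [hm.matchingTail_fst hp, hm.matchingTail_snd hp]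

theorem properColoring_comp_matchingTail [Std.Asymm lt] {f : V → ℕ}
    (hf : Function.Injective f) : ProperColoring G (f ∘ matchingTail m) := by
  intro u v hadj hc
  rcases (hm.matchingTail_eq_iff).1 (hf hc) with rfl | ⟨p, -, hp | hp⟩
  · exact hadj.ne rfl
  · exact p.2.2 (hp.1 ▸ hp.2 ▸ hadj)
  · exact p.2.2 (hp.1 ▸ hp.2 ▸ hadj.symm)

theorem repVec_comp_matchingTail [Std.Asymm lt] {f : V → ℕ} (hf : Function.Injective f) :
    repVec G lt (f ∘ matchingTail m) = m.indicator 1 := by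
  have hc : ∀ u v, (f ∘ matchingTail m) u = (f ∘ matchingTail m) v ↔
      u = v ∨ ∃ p ∈ m, (p.1.1 = u ∧ p.1.2 = v) ∨ (p.1.1 = v ∧ p.1.2 = u) :=
    fun u v => hf.eq_iff.trans hm.matchingTail_eq_iff
  funext a
  by_cases ha : a ∈ m
  · have hrep : IsClassRep lt (f ∘ matchingTail m) a.1.1 := by
      intro w hw
      rcases (hc w a.1.1).1 hw with rfl | ⟨p, hp, ⟨-, hpa⟩ | ⟨hpa, rfl⟩⟩
      · exact Or.inl rfl
      · exact absurd hpa (hm.snd_ne_fst hp ha)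
      · exact Or.inr (hm.eq_of_fst_eq hp ha hpa ▸ p.2.1)
    have hsame := (hc a.1.1 a.1.2).2 (Or.inr ⟨a, ha, Or.inl ⟨rfl, rfl⟩⟩)
    rw [repVec, if_pos ⟨hsame, hrep⟩, Set.indicator_of_mem ha, Pi.one_apply]
  · have hdiff : (f ∘ matchingTail m) a.1.1 ≠ (f ∘ matchingTail m) a.1.2 := by
      rw [Ne, hc]
      rintro (h | ⟨p, hp, ⟨h1, h2⟩ | ⟨h1, h2⟩⟩)
      · exact asymm a.2.1 (h ▸ a.2.1)
      · exact ha (Subtype.ext (Prod.ext h1 h2) ▸ hp)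
      · exact asymm a.2.1 (h1 ▸ h2 ▸ p.2.1)
    rw [repVec, if_neg fun h => hdiff h.1, Set.indicator_of_notMem ha]

end IsMatchingArcSet

theorem matchArcs_subset_col [Countable V] [Std.Asymm lt] : MATCHarcs G lt ⊆ COL G lt := by
  obtain ⟨f, hf⟩ := Countable.exists_injective_nat V
  refine convexHull_mono ?_
  rintro x ⟨m, hm, rfl⟩
  exact ⟨f ∘ matchingTail m, hm.properColoring_comp_matchingTail hf,
    (hm.repVec_comp_matchingTail hf).symm⟩

end

theorem statement4_general {V : Type*} [Fintype V]
    (G : SimpleGraph V)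
    (lt : V → V → Prop) (hlt : IsStrictTotalOrder V lt) :
    (∀ m : Set (Arc G lt), IsMatchingArcSet G lt m → IsStableSet (RGraph G lt) m) ∧
      MATCHarcs G lt ⊆ COL G lt :=
  ⟨fun _ hm => hm.isStableSet_rGraph, matchArcs_subset_col⟩

/-- every matching of the complement of `G` (as a set of arcs) is a stable set
of `R≺(G)`; consequently `MATCH(comp G) ⊆ COL≺(G)`. -/
theorem statement4 {V : Type*} [Fintype V] [DecidableEq V]
    (G : SimpleGraph V) [DecidableRel G.Adj]
    (lt : V → V → Prop) [DecidableRel lt] (hlt : IsStrictTotalOrder V lt) :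
    (∀ m : Set (Arc G lt), IsMatchingArcSet G lt m → IsStableSet (RGraph G lt) m) ∧
      MATCHarcs G lt ⊆ COL G lt :=
  statement4_general G lt hlt
end

section
/- Let G = (V,E) be a finite simple graph. Then the independence number of G is at most 2 if and only if for every linear order ≺ on V, the matching polytope of the complement of G (viewed in ℝ^A via the identification of edges of the complement with arcs) equals COL≺(G). -/
/-!
If `α(G) ≤ 2`, every colour class has at most two vertices, so the arcs from the least vertex
of a class to the other one form a matching of the complement. Conversely, a matching `m` is the
set of representative arcs of the colouring whose classes are the edges of `m` and the singletons
of the unmatched vertices. So both polytopes are hulls of the same points.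

If `G` has a stable set of size three, give it a single colour: if `x` is its least vertex and
`y`, `z` the other two, the representative vector puts `1` on both arcs `p = (x, y)` and
`q = (x, z)`. But `p` and `q` share the endpoint `x`, so every point `w` of the matching
polytope has `w p + w q ≤ 1`.
-/

open scoped Classical

namespace AlphaLeTwo

variable {V : Type*} {G : SimpleGraph V}

theorem eq_or_eq_or_eq (hα : AlphaLeTwo G) {x y z : V} (hxy : ¬ G.Adj x y)
    (hxz : ¬ G.Adj x z) (hyz : ¬ G.Adj y z) : x = y ∨ x = z ∨ y = z := by
  by_contra! hne
  obtain ⟨hxy', hxz', hyz'⟩ := hne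
  have hstable : IsStableSet G {x, y, z} := by
    intro a ha b hb
    simp only [Set.mem_insert_iff, Set.mem_singleton_iff] at ha hb
    rcases ha with rfl | rfl | rfl <;> rcases hb with rfl | rfl | rfl <;>
      simp_all [G.adj_comm]
  have h3 := hα _ hstable
  rw [Set.ncard_eq_three.mpr ⟨x, y, z, hxy', hxz', hyz', rfl⟩] at h3
  omega

end AlphaLeTwo

section Coloring

variable {V : Type*} (G : SimpleGraph V) (lt : V → V → Prop)

def repArcs (c : V → ℕ) : Set (Arc G lt) :=
  {a | c a.1.1 = c a.1.2 ∧ IsClassRep lt c a.1.1}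

theorem repVec_eq_indicator (c : V → ℕ) : repVec G lt c = (repArcs G lt c).indicator 1 := by
  funext a
  simp only [repVec, repArcs, Set.indicator_apply, Set.mem_ofPred_eq, Pi.one_apply]

variable {G lt}

theorem ProperColoring.not_adj {c : V → ℕ} (hc : ProperColoring G c)
    {u v : V} (h : c u = c v) : ¬ G.Adj u v :=
  fun hadj => hc u v hadj h

theorem IsClassRep.eq [IsStrictOrder V lt] {c : V → ℕ} {u v : V}
    (hu : IsClassRep lt c u) (hv : IsClassRep lt c v) (h : c u = c v) : u = v := by
  rcases hu v h.symm with huv | huv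
  · exact huv
  rcases hv u h with hvu | hvu
  · exact hvu.symm
  exact absurd hvu (asymm_of lt huv)

theorem isMatchingArcSet_repArcs [IsStrictOrder V lt] {c : V → ℕ}
    (hc : ∀ x y z, c x = c y → c x = c z → x = y ∨ x = z ∨ y = z) :
    IsMatchingArcSet G lt (repArcs G lt c) := by
  rintro p ⟨hp, hp_rep⟩ q ⟨hq, hq_rep⟩ hpq hshare
  have hcol : c p.1.1 = c q.1.1 := by
    rcases hshare with h | h | h | h <;> have := congrArg c h <;> omega
  have htail : p.1.1 = q.1.1 := hp_rep.eq hq_rep hcol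
  have hp_ne : p.1.1 ≠ p.1.2 := fun h => irrefl_of lt _ (h ▸ p.2.1)
  have hq_ne : p.1.1 ≠ q.1.2 := fun h => irrefl_of lt _ (htail ▸ h ▸ q.2.1)
  have hheads : p.1.2 ≠ q.1.2 := fun h => hpq (Subtype.ext (Prod.ext htail h))
  rcases hc _ _ _ hp (hcol.trans hq) with h | h | h <;> contradiction

theorem exists_properColoring_zero_iff [Countable V] {s : Set V} (hs : IsStableSet G s) :
    ∃ c : V → ℕ, ProperColoring G c ∧ ∀ v, c v = 0 ↔ v ∈ s := by
  obtain ⟨enc, henc⟩ := Countable.exists_injective_nat V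
  refine ⟨fun v => if v ∈ s then 0 else enc v + 1, fun u v huv => ?_, fun v => by simp⟩
  dsimp only
  split_ifs with hu hv hv
  · exact absurd huv (hs u hu v hv)
  · omega
  · omega
  · exact fun h => G.ne_of_adj huv (henc (by omega))

end Coloring

section Matching

variable {V : Type*} {G : SimpleGraph V} {lt : V → V → Prop} {m : Set (Arc G lt)}

namespace IsMatchingArcSet

theorem eq_of_fst_eq_s6 (hm : IsMatchingArcSet G lt m) {a b : Arc G lt} (ha : a ∈ m)
    (hb : b ∈ m) (h : a.1.1 = b.1.1) : a = b :=
  by_contra fun hab => hm a ha b hb hab (Or.inl h)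

theorem eq_of_snd_eq_s6 (hm : IsMatchingArcSet G lt m) {a b : Arc G lt} (ha : a ∈ m)
    (hb : b ∈ m) (h : a.1.2 = b.1.2) : a = b :=
  by_contra fun hab => hm a ha b hb hab (Or.inr (Or.inr (Or.inr h)))

theorem fst_ne_snd [Std.Irrefl lt] (hm : IsMatchingArcSet G lt m) {a b : Arc G lt}
    (ha : a ∈ m) (hb : b ∈ m) : a.1.1 ≠ b.1.2 := by
  intro h
  obtain rfl : a = b := by_contra fun hab => hm a ha b hb hab (Or.inr (Or.inl h))
  exact irrefl_of lt _ (h ▸ a.2.1)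

end IsMatchingArcSet

variable (m) in
noncomputable def matchTail (v : V) : V :=
  if h : ∃ a ∈ m, a.1.2 = v then h.choose.1.1 else v

variable (m) in
theorem matchTail_eq_self_or (v : V) : matchTail m v = v ∨ ∃ a ∈ m, a.1.2 = v := by
  unfold matchTail
  split_ifs with h
  · exact Or.inr h
  · exact Or.inl rfl

theorem matchTail_snd (hm : IsMatchingArcSet G lt m) {a : Arc G lt} (ha : a ∈ m) :
    matchTail m a.1.2 = a.1.1 := by
  have h : ∃ b ∈ m, b.1.2 = a.1.2 := ⟨a, ha, rfl⟩
  rw [matchTail, dif_pos h, hm.eq_of_snd_eq_s6 h.choose_spec.1 ha h.choose_spec.2]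

theorem matchTail_fst [Std.Irrefl lt] (hm : IsMatchingArcSet G lt m) {a : Arc G lt}
    (ha : a ∈ m) : matchTail m a.1.1 = a.1.1 := by
  rcases matchTail_eq_self_or m a.1.1 with h | ⟨b, hb, hba⟩
  · exact h
  · exact absurd hba.symm (hm.fst_ne_snd ha hb)

theorem matchTail_ne_of_adj (hm : IsMatchingArcSet G lt m) {u v : V} (huv : G.Adj u v) :
    matchTail m u ≠ matchTail m v := by
  intro h
  rcases matchTail_eq_self_or m u with hu | ⟨a, ha, rfl⟩ <;>
    rcases matchTail_eq_self_or m v with hv | ⟨b, hb, rfl⟩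
  · exact G.ne_of_adj huv (hu.symm.trans (h.trans hv))
  · rw [hu, matchTail_snd hm hb] at h
    exact b.2.2 (h ▸ huv)
  · rw [hv, matchTail_snd hm ha] at h
    exact a.2.2 (h ▸ huv.symm)
  · rw [matchTail_snd hm ha, matchTail_snd hm hb] at h
    obtain rfl := hm.eq_of_fst_eq_s6 ha hb h
    exact G.irrefl huv

theorem mem_iff_matchTail [IsStrictOrder V lt] (hm : IsMatchingArcSet G lt m) (a : Arc G lt) :
    a ∈ m ↔ matchTail m a.1.1 = matchTail m a.1.2 ∧
      ∀ w, matchTail m w = matchTail m a.1.1 → a.1.1 = w ∨ lt a.1.1 w := by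
  have ha_ne : a.1.1 ≠ a.1.2 := fun h => irrefl_of lt _ (h ▸ a.2.1)
  constructor
  · intro ha
    rw [matchTail_fst hm ha, matchTail_snd hm ha]
    refine ⟨rfl, fun w hw => ?_⟩
    rcases matchTail_eq_self_or m w with hw' | ⟨b, hb, rfl⟩
    · exact Or.inl (hw.symm.trans hw')
    · rw [matchTail_snd hm hb] at hw
      obtain rfl := hm.eq_of_fst_eq_s6 hb ha hw
      exact Or.inr b.2.1
  · rintro ⟨h, -⟩
    rcases matchTail_eq_self_or m a.1.2 with h2 | ⟨b, hb, hb2⟩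
    · rcases matchTail_eq_self_or m a.1.1 with h1 | ⟨b, hb, hb1⟩
      · exact absurd (h1.symm.trans (h.trans h2)) ha_ne
      · rw [← hb1, matchTail_snd hm hb, h2] at h
        have hba : lt a.1.2 a.1.1 := by rw [← h, ← hb1]; exact b.2.1
        exact absurd hba (asymm_of lt a.2.1)
    · rw [← hb2, matchTail_snd hm hb] at h
      rcases matchTail_eq_self_or m a.1.1 with h1 | ⟨b', hb', hb1⟩
      · rwa [← Subtype.ext (Prod.ext (h1.symm.trans h) hb2.symm)] at hb
      · rw [← hb1, matchTail_snd hm hb'] at h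
        obtain rfl := hm.eq_of_fst_eq_s6 hb' hb h
        exact absurd (hb1.symm.trans hb2) ha_ne

theorem exists_properColoring_repVec_eq_indicator [Countable V] [IsStrictOrder V lt]
    (hm : IsMatchingArcSet G lt m) :
    ∃ c : V → ℕ, ProperColoring G c ∧ repVec G lt c = m.indicator 1 := by
  obtain ⟨enc, henc⟩ := Countable.exists_injective_nat V
  refine ⟨enc ∘ matchTail m, fun u v huv h => matchTail_ne_of_adj hm huv (henc h), ?_⟩
  rw [repVec_eq_indicator]
  congr 1
  ext a
  simp only [repArcs, IsClassRep, Set.mem_ofPred_eq, Function.comp_apply, henc.eq_iff]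
  exact (mem_iff_matchTail hm a).symm

theorem MATCHarcs_subset_sum_le_one {p q : Arc G lt} (hpq : p ≠ q)
    (hshare : p.1.1 = q.1.1 ∨ p.1.1 = q.1.2 ∨ p.1.2 = q.1.1 ∨ p.1.2 = q.1.2) :
    MATCHarcs G lt ⊆ {x | x p + x q ≤ 1} := by
  have hlin : IsLinearMap ℝ (fun x : Arc G lt → ℝ => x p + x q) :=
    ⟨fun x y => by simp only [Pi.add_apply]; ring,
      fun r x => by simp only [Pi.smul_apply, smul_eq_mul]; ring⟩
  refine convexHull_min ?_ (convex_halfSpace_le hlin 1)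
  rintro _ ⟨m, hm, rfl⟩
  by_cases hp : p ∈ m <;> by_cases hq : q ∈ m
  · exact absurd hshare (hm p hp q hq hpq)
  all_goals simp [hp, hq]

end Matching

section Polytopes

variable {V : Type*} {G : SimpleGraph V} {lt : V → V → Prop}

theorem MATCHarcs_eq_COL [Countable V] [IsStrictOrder V lt] (hα : AlphaLeTwo G) :
    MATCHarcs G lt = COL G lt := by
  refine congrArg (convexHull ℝ) (Set.ext fun x => ⟨?_, ?_⟩)
  · rintro ⟨m, hm, rfl⟩
    obtain ⟨c, hc, h⟩ := exists_properColoring_repVec_eq_indicator hm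
    exact ⟨c, hc, h.symm⟩
  · rintro ⟨c, hc, rfl⟩
    refine ⟨repArcs G lt c, isMatchingArcSet_repArcs fun x y z hxy hxz => ?_,
      repVec_eq_indicator G lt c⟩
    exact hα.eq_or_eq_or_eq (hc.not_adj hxy) (hc.not_adj hxz) (hc.not_adj (hxy.symm.trans hxz))

theorem COL_not_subset_MATCHarcs [Countable V] {s : Set V} (hs : IsStableSet G s)
    {x y z : V} (hx : x ∈ s) (hy : y ∈ s) (hz : z ∈ s) (hxy : lt x y) (hxz : lt x z)
    (hyz : y ≠ z) (hmin : ∀ w ∈ s, x = w ∨ lt x w) :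
    ¬ COL G lt ⊆ MATCHarcs G lt := by
  intro hsub
  obtain ⟨c, hc, hc_zero⟩ := exists_properColoring_zero_iff hs
  have hrep : IsClassRep lt c x := fun w hw =>
    hmin w ((hc_zero w).1 (hw.trans ((hc_zero x).2 hx)))
  have hcol : ∀ w ∈ s, c x = c w := fun w hw =>
    ((hc_zero x).2 hx).trans ((hc_zero w).2 hw).symm
  let p : Arc G lt := ⟨(x, y), hxy, hs x hx y hy⟩
  let q : Arc G lt := ⟨(x, z), hxz, hs x hx z hz⟩
  have hpq : p ≠ q := fun h => hyz (congrArg (fun a : Arc G lt => a.1.2) h)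
  have hmem := MATCHarcs_subset_sum_le_one hpq (Or.inl rfl)
    (hsub (subset_convexHull ℝ _ ⟨c, hc, rfl⟩))
  simp only [Set.mem_ofPred_eq, repVec, p, q, if_pos (And.intro (hcol y hy) hrep),
    if_pos (And.intro (hcol z hz) hrep)] at hmem
  norm_num at hmem

theorem exists_min_and_two_of_two_lt_ncard [IsWellOrder V lt] {s : Set V}
    (hs : 2 < s.ncard) : ∃ x ∈ s, ∃ y ∈ s, ∃ z ∈ s,
      lt x y ∧ lt x z ∧ y ≠ z ∧ ∀ w ∈ s, x = w ∨ lt x w := by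
  have hfin : s.Finite := Set.finite_of_ncard_pos (by omega)
  obtain ⟨x, hx, hxmin⟩ :=
    (IsWellFounded.wf (r := lt)).has_min s (Set.nonempty_of_ncard_ne_zero (by omega))
  have hmin : ∀ w ∈ s, x = w ∨ lt x w := fun w hw =>
    (trichotomous_of lt x w).elim Or.inr fun h => Or.inl (h.resolve_right (hxmin w hw))
  have hrest : 1 < (s \ {x}).ncard := by
    rw [Set.ncard_sdiff_singleton_of_mem hx]
    omega
  obtain ⟨y, z, ⟨hy, hyx⟩, ⟨hz, hzx⟩, hyz⟩ := (Set.one_lt_ncard_iff hfin.sdiff).1 hrest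
  exact ⟨x, hx, y, hy, z, hz, (hmin y hy).resolve_left (Ne.symm hyx),
    (hmin z hz).resolve_left (Ne.symm hzx), hyz, hmin⟩

end Polytopes

theorem statement6_general {V : Type*} [Fintype V]
    (G : SimpleGraph V) :
    AlphaLeTwo G ↔
      ∀ lt : V → V → Prop, IsStrictTotalOrder V lt → MATCHarcs G lt = COL G lt := by
  refine ⟨fun hα lt _ => MATCHarcs_eq_COL hα, fun h => ?_⟩
  by_contra hα
  obtain ⟨s, hs, hcard⟩ : ∃ s, IsStableSet G s ∧ 2 < s.ncard := by
    simpa [AlphaLeTwo] using hα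
  obtain ⟨x, hx, y, hy, z, hz, hxy, hxz, hyz, hmin⟩ :=
    exists_min_and_two_of_two_lt_ncard (lt := WellOrderingRel) hcard
  exact COL_not_subset_MATCHarcs hs hx hy hz hxy hxz hyz hmin (h _ inferInstance).ge

/-- `α(G) ≤ 2` iff for every linear order `≺` on `V`, the matching polytope of
the complement of `G` equals `COL≺(G)`. -/
theorem statement6 {V : Type*} [Fintype V] [DecidableEq V]
    (G : SimpleGraph V) [DecidableRel G.Adj] :
    AlphaLeTwo G ↔
      ∀ lt : V → V → Prop, IsStrictTotalOrder V lt → MATCHarcs G lt = COL G lt :=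
  statement6_general G
end

section
/- Let H be a finite simple graph on a vertex set S that is 2-connected and hypomatchable, and suppose the independence number of the complement of H is at most 2. Then |S| is odd and the chromatic number of the complement of H equals (|S|+1)/2. -/
open scoped Classical

/-! A perfect matching of `H - u` partitions the vertices into `{u}` and pairs of `H`-adjacent
vertices. These are stable sets of `Hᶜ`, so `|S|` is odd and `χ(Hᶜ) ≤ (|S| + 1) / 2`.
Conversely, each colour class of `Hᶜ` is stable, hence has at most two vertices by `α(Hᶜ) ≤ 2`,
so `|S| ≤ 2 χ(Hᶜ)`. -/

open SimpleGraph Finset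

lemma SimpleGraph.induce_compl {V : Type*} (G : SimpleGraph V) (s : Set V) :
    Gᶜ.induce s = (G.induce s)ᶜ := by
  ext a b
  simp [Subtype.val_inj]

section Coloring

variable {V : Type*} {G : SimpleGraph V}

lemma chromNum_le_of_properColoring {c : V → ℕ} {k : ℕ} (hc : ProperColoring G c)
    (hk : ∀ v, c v < k) : chromNum G ≤ k :=
  Nat.sInf_le ⟨c, hc, hk⟩

lemma exists_properColoring_lt_chromNum [Finite V] (G : SimpleGraph V) :
    ∃ c : V → ℕ, ProperColoring G c ∧ ∀ v, c v < chromNum G := by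
  let e := Finite.equivFin V
  have hinj : ProperColoring G fun v => e v := fun v w hvw h =>
    hvw.ne (e.injective (Fin.val_injective h))
  exact Nat.sInf_mem (s := {k | ∃ c : V → ℕ, ProperColoring G c ∧ ∀ v, c v < k})
    ⟨_, _, hinj, fun v => (e v).isLt⟩

lemma card_le_two_mul_chromNum [Fintype V] (hα : AlphaLeTwo G) :
    Fintype.card V ≤ 2 * chromNum G := by
  obtain ⟨c, hc, hlt⟩ := exists_properColoring_lt_chromNum G
  have hclass : ∀ i, #{v | c v = i} ≤ 2 := fun i => by
    have hstable : IsStableSet G ↑({v | c v = i} : Finset V) := by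
      intro a ha b hb hab
      simp only [coe_filter, mem_univ, true_and, Set.mem_ofPred_eq] at ha hb
      exact hc a b hab (ha.trans hb.symm)
    simpa only [Set.ncard_coe_finset] using hα _ hstable
  simpa using card_le_mul_card_image_of_maps_to (s := univ) (t := range (chromNum G))
    (fun v _ => mem_range.2 (hlt v)) 2 (fun i _ => hclass i)

lemma ProperColoring.exists_extend_of_induce_ne {u : V} {c : ({v | v ≠ u} : Set V) → ℕ} {k : ℕ}
    (hc : ProperColoring (G.induce {v | v ≠ u}) c) (hk : ∀ v, c v < k) :
    ∃ d : V → ℕ, ProperColoring G d ∧ ∀ v, d v < k + 1 := by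
  refine ⟨fun v => if h : v = u then k else c ⟨v, h⟩, fun v w hvw => ?_, fun v => ?_⟩
  · by_cases hv : v = u <;> by_cases hw : w = u
    · exact absurd (hv.trans hw.symm) hvw.ne
    all_goals simp only [hv, hw, dite_true, dite_false]
    · exact (hk ⟨w, hw⟩).ne'
    · exact (hk ⟨v, hv⟩).ne
    · exact hc ⟨v, hv⟩ ⟨w, hw⟩ hvw
  · dsimp only
    split_ifs
    · exact k.lt_succ_self
    · exact (hk _).trans k.lt_succ_self

end Coloring

namespace SimpleGraph.Subgraph

variable {V : Type*} {G : SimpleGraph V} {M : G.Subgraph}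

lemma IsPerfectMatching.card_eq_two_mul_card_edgeSet [Fintype V] (hM : M.IsPerfectMatching) :
    Fintype.card V = 2 * Nat.card M.edgeSet := by
  classical
  have hdeg : ∀ v, M.spanningCoe.degree v = 1 := fun v => by
    rw [degree_spanningCoe]
    exact isPerfectMatching_iff_forall_degree.1 hM v
  calc Fintype.card V = ∑ v, M.spanningCoe.degree v := by simp [hdeg]
    _ = 2 * #M.spanningCoe.edgeFinset := sum_degrees_eq_twice_card_edges _
    _ = 2 * Nat.card M.edgeSet := by
      rw [edgeFinset_card, ← Nat.card_eq_fintype_card, edgeSet_spanningCoe]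

lemma IsPerfectMatching.adj_of_toEdge_eq (hM : M.IsPerfectMatching) {v w : V}
    (h : hM.1.toEdge ⟨v, hM.2 v⟩ = hM.1.toEdge ⟨w, hM.2 w⟩) (hvw : v ≠ w) : M.Adj v w := by
  obtain ⟨x, hx, -⟩ := hM.1 (hM.2 v)
  have hw := hM.1.mem_coe_toEdge (hM.2 w)
  rw [← h, hM.1.toEdge_eq_of_adj hx, Sym2.mem_iff] at hw
  rcases hw with rfl | rfl
  · exact absurd rfl hvw
  · exact hx

lemma IsPerfectMatching.exists_properColoring_compl [Finite V] (hM : M.IsPerfectMatching) :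
    ∃ c : V → ℕ, ProperColoring Gᶜ c ∧ ∀ v, c v < Nat.card M.edgeSet := by
  let e := Finite.equivFin M.edgeSet
  refine ⟨fun v => e (hM.1.toEdge ⟨v, hM.2 v⟩), fun v w hvw h => ?_, fun v => (e _).isLt⟩
  exact hvw.2 (M.adj_sub (hM.adj_of_toEdge_eq (e.injective (Fin.val_injective h)) hvw.1))

end SimpleGraph.Subgraph

theorem statement11_general {W : Type*} [Fintype W] (H : SimpleGraph W)
    (h2c : TwoConnected H) (hhm : Hypomatchable H) (hα : AlphaLeTwo Hᶜ) :
    Odd (Fintype.card W) ∧ chromNum Hᶜ = (Fintype.card W + 1) / 2 := by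
  have hthree := h2c.2.1
  obtain ⟨u⟩ : Nonempty W := Fintype.card_pos_iff.1 (by omega)
  obtain ⟨M, hM⟩ := hhm u
  have hcard : Fintype.card W = 2 * Nat.card M.edgeSet + 1 := by
    have hpairs := hM.card_eq_two_mul_card_edgeSet
    rw [Set.card_ne_eq] at hpairs
    omega
  obtain ⟨c, hc, hlt⟩ := hM.exists_properColoring_compl
  rw [← induce_compl] at hc
  obtain ⟨d, hd, hdlt⟩ := hc.exists_extend_of_induce_ne hlt
  have hupper := chromNum_le_of_properColoring hd hdlt
  have hlower := card_le_two_mul_chromNum hα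
  exact ⟨⟨_, hcard⟩, by omega⟩

/-- if `H` is 2-connected and hypomatchable and `α(Hᶜ) ≤ 2`, then the number
of vertices is odd and `χ(Hᶜ) = (|S|+1)/2`. -/
theorem statement11 {W : Type*} [Fintype W] [DecidableEq W] (H : SimpleGraph W)
    (h2c : TwoConnected H) (hhm : Hypomatchable H) (hα : AlphaLeTwo Hᶜ) :
    Odd (Fintype.card W) ∧ chromNum Hᶜ = (Fintype.card W + 1) / 2 :=
  statement11_general H h2c hhm hα
end

section
/- Let G = (V,E) be a finite simple graph whose complement contains no paw as a subgraph, and let ≺ be any linear order on V. Then the Cornaz–Jost graph R≺(G) is a line graph, i.e., there exists a finite simple graph H such that R≺(G) is isomorphic to the line graph L(H). -/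
open scoped Classical

/-!
Since `Gᶜ` is paw-free, every triangle of `Gᶜ` is a whole connected component of `Gᶜ`. So the only
pairs of arcs that share an endpoint but are not adjacent in `R≺(G)` are the arcs `(u, w)` and
`(u, v)` of a triangle `u ≺ w ≺ v` of `Gᶜ`, and no other arc meets that triangle. Hence `R≺(G)` is
the line graph of the graph obtained from `Gᶜ` by detaching, in every such triangle, the edge `uv`
from `u` and attaching it to a new vertex `u'` instead.
-/

theorem Sym2.exists_mem_mk_and_mem_mk {β : Type*} {a b c d : β} :
    (∃ x, x ∈ s(a, b) ∧ x ∈ s(c, d)) ↔ a = c ∨ a = d ∨ b = c ∨ b = d := by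
  simp only [Sym2.mem_iff]
  aesop

namespace SimpleGraph

variable {α β : Type*}

noncomputable def isoLineGraphOfEdgeLabelling (R : SimpleGraph α) (f : α → Sym2 β)
    (hf : Function.Injective f) (hdiag : ∀ a, ¬ (f a).IsDiag)
    (hadj : ∀ p q, R.Adj p q ↔ p ≠ q ∧ ∃ x, x ∈ f p ∧ x ∈ f q) :
    R ≃g (fromEdgeSet (Set.range f)).lineGraph where
  toEquiv := Equiv.ofBijective
    (fun a => ⟨f a, by simp [edgeSet_fromEdgeSet, hdiag a]⟩)
    ⟨fun _ _ h => hf (congrArg Subtype.val h), by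
      rintro ⟨e, he⟩
      obtain ⟨a, rfl⟩ := (edgeSet_fromEdgeSet _ ▸ he).1
      exact ⟨a, rfl⟩⟩
  map_rel_iff' {p q} := by
    rw [lineGraph_adj_iff_exists, hadj]
    exact and_congr_left' (Equiv.injective _).ne_iff

end SimpleGraph

theorem eq_or_eq_of_adj_of_triangle {W : Type*} {K : SimpleGraph W}
    (hK : ¬ ContainsCopy pawGraph K) {a b c d : W}
    (hab : K.Adj a b) (hac : K.Adj a c) (hbc : K.Adj b c) (had : K.Adj a d) :
    d = b ∨ d = c := by
  by_contra! h
  refine hK ⟨![b, c, a, d], ?_, ?_⟩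
  · have := hab.ne; have := hac.ne; have := hbc.ne; have := had.ne
    intro x y hxy
    fin_cases x <;> fin_cases y <;> simp_all [eq_comm]
  · intro x y hxy
    fin_cases x <;> fin_cases y <;>
      simp_all [pawGraph, SimpleGraph.fromEdgeSet_adj, hab.symm, hac.symm, hbc.symm, had.symm]

namespace CornazJost

variable {V : Type*} (G : SimpleGraph V) (lt : V → V → Prop)

def SpansTriangle (u v : V) : Prop :=
  ∃ w, lt u w ∧ lt w v ∧ ¬ G.Adj u w ∧ ¬ G.Adj w v

/-- The new vertex `u'` is `Sum.inr u`. -/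
noncomputable def arcTail (p : Arc G lt) : V ⊕ V :=
  if SpansTriangle G lt p.1.1 p.1.2 then .inr p.1.1 else .inl p.1.1

noncomputable def arcEdge (p : Arc G lt) : Sym2 (V ⊕ V) :=
  s(arcTail G lt p, .inl p.1.2)

variable {G lt}

theorem compl_adj_of_lt [Std.Irrefl lt] {u v : V} (h : lt u v) (hn : ¬ G.Adj u v) :
    Gᶜ.Adj u v :=
  ⟨ne_of_irrefl h, hn⟩

theorem not_spansTriangle_of_lt [IsStrictOrder V lt] (hpaw : ¬ ContainsCopy pawGraph Gᶜ)
    {x u v : V} (hxu : lt x u) (hnxu : ¬ G.Adj x u) (hnuv : ¬ G.Adj u v) :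
    ¬ SpansTriangle G lt u v := by
  rintro ⟨w, huw, hwv, hnuw, hnwv⟩
  have huv := _root_.trans huw hwv
  rcases eq_or_eq_of_adj_of_triangle hpaw (compl_adj_of_lt huw hnuw) (compl_adj_of_lt huv hnuv)
    (compl_adj_of_lt hwv hnwv) (compl_adj_of_lt hxu hnxu).symm with rfl | rfl
  · exact asymm hxu huw
  · exact asymm hxu huv

theorem spansTriangle_iff [IsStrictOrder V lt] (hpaw : ¬ ContainsCopy pawGraph Gᶜ)
    {u v v' : V} (hnuv : ¬ G.Adj u v) (huv' : lt u v') (hnuv' : ¬ G.Adj u v') (hvv' : v ≠ v') :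
    SpansTriangle G lt u v ↔ lt v' v ∧ ¬ G.Adj v' v := by
  refine ⟨fun ⟨w, huw, hwv, hnuw, hnwv⟩ => ?_, fun ⟨hv'v, hnv'v⟩ => ⟨v', huv', hv'v, hnuv', hnv'v⟩⟩
  rcases eq_or_eq_of_adj_of_triangle hpaw (compl_adj_of_lt huw hnuw)
    (compl_adj_of_lt (_root_.trans huw hwv) hnuv) (compl_adj_of_lt hwv hnwv)
    (compl_adj_of_lt huv' hnuv') with rfl | rfl
  · exact ⟨hwv, hnwv⟩
  · exact absurd rfl hvv'

theorem arcTail_eq_inl_iff {p : Arc G lt} {x : V} :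
    arcTail G lt p = .inl x ↔ ¬ SpansTriangle G lt p.1.1 p.1.2 ∧ p.1.1 = x := by
  unfold arcTail
  split_ifs <;> simp [*]

theorem arcTail_eq_arcTail_iff {p q : Arc G lt} :
    arcTail G lt p = arcTail G lt q ↔
      p.1.1 = q.1.1 ∧ (SpansTriangle G lt p.1.1 p.1.2 ↔ SpansTriangle G lt q.1.1 q.1.2) := by
  unfold arcTail
  split_ifs <;> simp [*]

theorem arcEdge_injective [IsStrictOrder V lt] : Function.Injective (arcEdge G lt) := by
  intro p q h
  rcases Sym2.eq_iff.1 h with ⟨ht, hh⟩ | ⟨ht, hh⟩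
  · exact Subtype.ext (Prod.ext (arcTail_eq_arcTail_iff.1 ht).1 (Sum.inl_injective hh))
  · have hpq := (arcTail_eq_inl_iff.1 ht).2
    have hqp := (arcTail_eq_inl_iff.1 hh.symm).2
    exact absurd (hqp ▸ q.2.1) (asymm (hpq ▸ p.2.1))

theorem arcEdge_not_isDiag [Std.Irrefl lt] (p : Arc G lt) : ¬ (arcEdge G lt p).IsDiag := by
  rw [arcEdge, Sym2.mk_isDiag_iff, arcTail]
  split_ifs
  · simp
  · simpa using ne_of_irrefl p.2.1

theorem exists_mem_arcEdge_iff (p q : Arc G lt) :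
    (∃ x, x ∈ arcEdge G lt p ∧ x ∈ arcEdge G lt q) ↔
      (p.1.1 = q.1.1 ∧ (SpansTriangle G lt p.1.1 p.1.2 ↔ SpansTriangle G lt q.1.1 q.1.2)) ∨
      (¬ SpansTriangle G lt p.1.1 p.1.2 ∧ p.1.1 = q.1.2) ∨
      (¬ SpansTriangle G lt q.1.1 q.1.2 ∧ q.1.1 = p.1.2) ∨ p.1.2 = q.1.2 := by
  rw [arcEdge, arcEdge, Sym2.exists_mem_mk_and_mem_mk, arcTail_eq_arcTail_iff,
    arcTail_eq_inl_iff, eq_comm (a := Sum.inl p.1.2), arcTail_eq_inl_iff, Sum.inl.injEq]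

theorem rGraph_adj_iff [IsStrictTotalOrder V lt] (hpaw : ¬ ContainsCopy pawGraph Gᶜ)
    (p q : Arc G lt) :
    (RGraph G lt).Adj p q ↔ p ≠ q ∧ ∃ x, x ∈ arcEdge G lt p ∧ x ∈ arcEdge G lt q := by
  rw [exists_mem_arcEdge_iff]
  obtain ⟨⟨u, v⟩, huv, hnuv⟩ := p
  obtain ⟨⟨u', v'⟩, huv', hnuv'⟩ := q
  have hne : (⟨(u, v), huv, hnuv⟩ : Arc G lt) ≠ ⟨(u', v'), huv', hnuv'⟩ ↔ ¬ (u = u' ∧ v = v') := by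
    simp
  simp only [RGraph, hne]
  by_cases huu' : u = u'
  · subst huu'
    have huv_ne := ne_of_irrefl huv
    have huv'_ne := ne_of_irrefl huv'
    by_cases hvv' : v = v'
    · simp [hvv']
    rw [spansTriangle_iff hpaw hnuv huv' hnuv' hvv',
      spansTriangle_iff hpaw hnuv' huv hnuv (Ne.symm hvv')]
    rcases trichotomous_of lt v v' with h | h | h
    · simp [h, asymm h, huv_ne, huv'_ne, hvv', eq_comm]
    · exact absurd h hvv'
    · simp [h, asymm h, huv_ne, huv'_ne, hvv', eq_comm, G.adj_comm]
  · have h₁ : u = v' → ¬ SpansTriangle G lt u v := fun h =>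
      not_spansTriangle_of_lt hpaw (h ▸ huv') (h ▸ hnuv') hnuv
    have h₂ : v = u' → ¬ SpansTriangle G lt u' v' := fun h =>
      not_spansTriangle_of_lt hpaw (h ▸ huv) (h ▸ hnuv) hnuv'
    simp only [huu', false_and, not_false_eq_true, true_and, false_or, eq_comm (a := u')]
    clear hne
    tauto

end CornazJost

theorem statement15_general {V : Type*} [Fintype V]
    (G : SimpleGraph V)
    (lt : V → V → Prop) (hlt : IsStrictTotalOrder V lt)
    (hpaw : ¬ ContainsCopy pawGraph Gᶜ) :
    ∃ (n : ℕ) (H : SimpleGraph (Fin n)),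
      Nonempty (RGraph G lt ≃g H.lineGraph) := by
  have e := SimpleGraph.isoLineGraphOfEdgeLabelling (RGraph G lt) (CornazJost.arcEdge G lt)
    CornazJost.arcEdge_injective CornazJost.arcEdge_not_isDiag (CornazJost.rGraph_adj_iff hpaw)
  exact ⟨_, _, ⟨e.trans (SimpleGraph.overFinIso _ rfl).lineGraph⟩⟩

/-- if the complement of `G` has no paw subgraph, then `R≺(G)` is a line
graph (of some finite simple graph). -/
theorem statement15 {V : Type*} [Fintype V] [DecidableEq V]
    (G : SimpleGraph V) [DecidableRel G.Adj]
    (lt : V → V → Prop) [DecidableRel lt] (hlt : IsStrictTotalOrder V lt)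
    (hpaw : ¬ ContainsCopy pawGraph Gᶜ) :
    ∃ (n : ℕ) (H : SimpleGraph (Fin n)),
      Nonempty (RGraph G lt ≃g H.lineGraph) :=
  statement15_general G lt hlt hpaw
end

section
/- Let G = (V,E) be a finite simple graph. Then the Cornaz–Jost graph R≺(G) is claw-free for every linear order ≺ on V if and only if the complement of G does not contain a kite as a subgraph. -/
open scoped Classical

/-!
An arc `(u, v)` is an edge of `Gᶜ` oriented by `≺`, and two arcs are non-adjacent in `R≺(G)`
exactly when they are disjoint or leave a common tail towards heads non-adjacent in `G`. So the
leaves of a claw passing through a common vertex `w` all have tail `w`, and their heads together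
with `w` form a clique of `Gᶜ`. Two of the three leaves pass through the same endpoint `w` of the
centre `ww'`, and the third leaf completes a kite of `Gᶜ`: through `w` it gives a `K₄` with the
pendant edge `ww'`, through `w'` a triangle on `w` with the path `w w' z`.
Conversely, a kite with triangle `abc` and path `c d e` yields the claw centred at `(d, c)` with
leaves `(c, a)`, `(c, b)`, `(e, d)` for any order with `e ≺ d ≺ c ≺ a, b`.
-/

section Copies

variable {W : Type*} {H : SimpleGraph W}

theorem containsCopy_kiteGraph_iff :
    ContainsCopy kiteGraph H ↔ ∃ a b c d e, H.Adj a b ∧ H.Adj a c ∧ H.Adj b c ∧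
      H.Adj c d ∧ H.Adj d e ∧ a ≠ d ∧ a ≠ e ∧ b ≠ d ∧ b ≠ e ∧ c ≠ e := by
  constructor
  · rintro ⟨f, hf, hadj⟩
    refine ⟨f 0, f 1, f 2, f 3, f 4, hadj 0 1 ?_, hadj 0 2 ?_, hadj 1 2 ?_, hadj 2 3 ?_,
      hadj 3 4 ?_, hf.ne ?_, hf.ne ?_, hf.ne ?_, hf.ne ?_, hf.ne ?_⟩ <;> simp [kiteGraph]
  · rintro ⟨a, b, c, d, e, hab, hac, hbc, hcd, hde, had, hae, hbd, hbe, hce⟩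
    refine ⟨![a, b, c, d, e], ?_, ?_⟩
    · have := hab.ne; have := hac.ne; have := hbc.ne; have := hcd.ne; have := hde.ne
      intro i j hij
      fin_cases i <;> fin_cases j <;> simp_all
    · intro i j hij
      fin_cases i <;> fin_cases j <;> simp_all [kiteGraph, H.adj_comm]

theorem containsInducedCopy_clawGraph_iff :
    ContainsInducedCopy clawGraph H ↔ ∃ p q r s, H.Adj p q ∧ H.Adj p r ∧ H.Adj p s ∧
      ¬ H.Adj q r ∧ ¬ H.Adj q s ∧ ¬ H.Adj r s ∧ q ≠ r ∧ q ≠ s ∧ r ≠ s := by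
  constructor
  · rintro ⟨f, hf, hadj⟩
    refine ⟨f 0, f 1, f 2, f 3, ?_, ?_, ?_, ?_, ?_, ?_,
      hf.ne (by decide), hf.ne (by decide), hf.ne (by decide)⟩ <;> simp [hadj, clawGraph]
  · rintro ⟨p, q, r, s, hpq, hpr, hps, hqr, hqs, hrs, hqr', hqs', hrs'⟩
    refine ⟨![p, q, r, s], ?_, ?_⟩
    · have := hpq.ne; have := hpr.ne; have := hps.ne
      intro i j hij
      fin_cases i <;> fin_cases j <;> simp_all
    · intro i j
      fin_cases i <;> fin_cases j <;> simp_all [clawGraph, H.adj_comm]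

end Copies

theorem exists_isStrictTotalOrder_of_rank {V : Type*} (r : V → ℕ) :
    ∃ lt : V → V → Prop, IsStrictTotalOrder V lt ∧ ∀ x y, r x < r y → lt x y :=
  letI : LinearOrder V := LinearOrder.lift' (fun v => toLex (r v, embeddingToCardinal v))
    fun _ _ h => embeddingToCardinal.injective (congrArg (·.2) h)
  ⟨(· < ·), inferInstance, fun _ _ h => Prod.Lex.toLex_lt_toLex.mpr (Or.inl h)⟩

section CornazJost

variable {V : Type*} {G : SimpleGraph V} {lt : V → V → Prop}

namespace Arc

def edge (a : Arc G lt) : Sym2 V := s(a.1.1, a.1.2)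

theorem fst_ne_snd [Std.Irrefl lt] (a : Arc G lt) : a.1.1 ≠ a.1.2 :=
  fun h => irrefl_of lt a.1.1 (h ▸ a.2.1)

theorem edge_mem_edgeSet_compl [Std.Irrefl lt] (a : Arc G lt) : a.edge ∈ Gᶜ.edgeSet :=
  (G.compl_adj _ _).2 ⟨a.fst_ne_snd, a.2.2⟩

theorem edge_injective [Std.Asymm lt] : Function.Injective (edge : Arc G lt → Sym2 V) := by
  rintro ⟨⟨u, v⟩, huv, -⟩ ⟨⟨u', v'⟩, huv', -⟩ (h : s(u, v) = s(u', v'))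
  rcases Sym2.eq_iff.1 h with ⟨rfl, rfl⟩ | ⟨rfl, rfl⟩
  · rfl
  · exact absurd huv' (asymm huv)

end Arc

namespace RGraph

variable {p q : Arc G lt}

theorem exists_mem_edge_of_adj (h : (RGraph G lt).Adj p q) : ∃ v ∈ p.edge, v ∈ q.edge := by
  obtain ⟨-, h | h | h | h, -⟩ := h <;> simp [Arc.edge, h]

theorem mem_edge_of_adj {w w' : V} (h : (RGraph G lt).Adj p q) (hp : p.edge = s(w, w')) :
    w ∈ q.edge ∨ w' ∈ q.edge := by
  obtain ⟨v, hvp, hvq⟩ := exists_mem_edge_of_adj h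
  rw [hp, Sym2.mem_iff] at hvp
  rcases hvp with rfl | rfl
  exacts [Or.inl hvq, Or.inr hvq]

theorem adj_of_snd_eq_fst [Std.Irrefl lt] (h : p.1.2 = q.1.1) : (RGraph G lt).Adj p q := by
  refine ⟨?_, Or.inr (Or.inr (Or.inl h)), fun hc => p.fst_ne_snd (hc.1.trans h.symm)⟩
  rintro rfl
  exact p.fst_ne_snd h.symm

theorem not_adj_of_fst_eq (h : p.1.1 = q.1.1) (hG : ¬ G.Adj p.1.2 q.1.2) :
    ¬ (RGraph G lt).Adj p q :=
  fun hadj => hadj.2.2 ⟨h, hG⟩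

theorem not_adj_of_disjoint (h : ∀ v ∈ p.edge, v ∉ q.edge) : ¬ (RGraph G lt).Adj p q :=
  fun hadj =>
    let ⟨v, hp, hq⟩ := exists_mem_edge_of_adj hadj
    h v hp hq

theorem fst_eq_of_not_adj [Std.Irrefl lt] {w : V} (hne : p ≠ q) (h : ¬ (RGraph G lt).Adj p q)
    (hp : w ∈ p.edge) (hq : w ∈ q.edge) : p.1.1 = w ∧ q.1.1 = w ∧ Gᶜ.Adj p.1.2 q.1.2 := by
  simp only [Arc.edge, Sym2.mem_iff] at hp hq
  have hshare : p.1.1 = q.1.1 ∨ p.1.1 = q.1.2 ∨ p.1.2 = q.1.1 ∨ p.1.2 = q.1.2 := by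
    rcases hp with rfl | rfl <;> rcases hq with h' | h' <;> simp [h']
  obtain ⟨hfst, hG⟩ : p.1.1 = q.1.1 ∧ ¬ G.Adj p.1.2 q.1.2 := by
    by_contra hc
    exact h ⟨hne, hshare, hc⟩
  have hsnd : p.1.2 ≠ q.1.2 := fun hsnd => hne (Subtype.ext (Prod.ext hfst hsnd))
  have hw : w = p.1.1 := by
    rcases hp with hw | hw
    · exact hw
    · rcases hq with hw' | hw'
      · exact absurd (hfst.trans (hw'.symm.trans hw)) p.fst_ne_snd
      · exact absurd (hw.symm.trans hw') hsnd
  exact ⟨hw.symm, hfst.symm.trans hw.symm, (G.compl_adj _ _).2 ⟨hsnd, hG⟩⟩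

end RGraph

theorem containsCopy_kiteGraph_of_leaves [Std.Asymm lt] {p q r s : Arc G lt}
    {L : Set (Arc G lt)} {w w' : V} (hL : (RGraph G lt).IsIndepSet L)
    (hLp : ∀ ℓ ∈ L, (RGraph G lt).Adj p ℓ) (hq : q ∈ L) (hr : r ∈ L) (hs : s ∈ L)
    (hqr : q ≠ r) (hqs : q ≠ s) (hrs : r ≠ s) (hp : p.edge = s(w, w'))
    (hwq : w ∈ q.edge) (hwr : w ∈ r.edge) : ContainsCopy kiteGraph Gᶜ := by
  rw [containsCopy_kiteGraph_iff]
  have hww' : Gᶜ.Adj w w' := (SimpleGraph.mem_edgeSet _).1 (hp ▸ p.edge_mem_edgeSet_compl)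
  have hhead : ∀ ℓ ∈ L, ℓ.1.1 = w → ℓ.1.2 ≠ w' := by
    intro ℓ hℓ h₁ h₂
    refine (hLp ℓ hℓ).ne (Arc.edge_injective ?_).symm
    rw [hp, Arc.edge, h₁, h₂]
  obtain ⟨hq₁, hr₁, hxy⟩ := RGraph.fst_eq_of_not_adj hqr (hL hq hr hqr) hwq hwr
  have hwx : Gᶜ.Adj w q.1.2 := hq₁ ▸ q.edge_mem_edgeSet_compl
  have hwy : Gᶜ.Adj w r.1.2 := hr₁ ▸ r.edge_mem_edgeSet_compl
  by_cases hws : w ∈ s.edge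
  · obtain ⟨-, hs₁, hxz⟩ := RGraph.fst_eq_of_not_adj hqs (hL hq hs hqs) hwq hws
    obtain ⟨-, -, hyz⟩ := RGraph.fst_eq_of_not_adj hrs (hL hr hs hrs) hwr hws
    have hzw : Gᶜ.Adj s.1.2 w := (hs₁ ▸ s.edge_mem_edgeSet_compl : Gᶜ.Adj w s.1.2).symm
    exact ⟨q.1.2, r.1.2, s.1.2, w, w', hxy, hxz, hyz, hzw, hww', hwx.ne', hhead q hq hq₁,
      hwy.ne', hhead r hr hr₁, hhead s hs hs₁⟩
  · obtain ⟨z, hsz⟩ :=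
      Sym2.mem_iff_exists.1 ((RGraph.mem_edge_of_adj (hLp s hs) hp).resolve_left hws)
    have hw'z : Gᶜ.Adj w' z := (SimpleGraph.mem_edgeSet _).1 (hsz ▸ s.edge_mem_edgeSet_compl)
    -- a leaf through the head of another leaf would have that head as its tail
    have hhead_ne : ∀ ℓ ∈ L, ℓ ≠ s → ℓ.1.2 ≠ z := by
      intro ℓ hℓ hℓs h
      refine ℓ.fst_ne_snd (RGraph.fst_eq_of_not_adj hℓs (hL hℓ hs hℓs) ?_ ?_).1
      · exact Sym2.mem_mk_right _ _
      · rw [hsz, h]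
        exact Sym2.mem_mk_right _ _
    have hwz : w ≠ z := fun h => hws (by rw [hsz, h]; exact Sym2.mem_mk_right _ _)
    exact ⟨q.1.2, r.1.2, w, w', z, hxy, hwx.symm, hwy.symm, hww', hw'z, hhead q hq hq₁,
      hhead_ne q hq hqs, hhead r hr hr₁, hhead_ne r hr hrs, hwz⟩

theorem containsCopy_kiteGraph_of_containsInducedCopy_clawGraph [Std.Asymm lt]
    (h : ContainsInducedCopy clawGraph (RGraph G lt)) : ContainsCopy kiteGraph Gᶜ := by
  obtain ⟨p, q, r, s, hpq, hpr, hps, hqr, hqs, hrs, hqr', hqs', hrs'⟩ :=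
    containsInducedCopy_clawGraph_iff.1 h
  have hL : (RGraph G lt).IsIndepSet {q, r, s} := by
    simp [SimpleGraph.IsIndepSet, Set.pairwise_insert, SimpleGraph.adj_comm, *]
  have hLp : ∀ ℓ ∈ ({q, r, s} : Set (Arc G lt)), (RGraph G lt).Adj p ℓ := by simp [*]
  have kite {a b c : Arc G lt} {w w' : V} (ha : a ∈ ({q, r, s} : Set _))
      (hb : b ∈ ({q, r, s} : Set _)) (hc : c ∈ ({q, r, s} : Set _)) :=
    containsCopy_kiteGraph_of_leaves (w := w) (w' := w') hL hLp ha hb hc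
  have hu : p.edge = s(p.1.1, p.1.2) := rfl
  have hv : p.edge = s(p.1.2, p.1.1) := Sym2.eq_swap
  rcases RGraph.mem_edge_of_adj hpq hu with hq | hq <;>
    rcases RGraph.mem_edge_of_adj hpr hu with hr | hr
  · exact kite (by simp) (by simp) (by simp) hqr' hqs' hrs' hu hq hr
  · rcases RGraph.mem_edge_of_adj hps hu with hs | hs
    · exact kite (by simp) (by simp) (by simp) hqs' hqr' hrs'.symm hu hq hs
    · exact kite (by simp) (by simp) (by simp) hrs' hqr'.symm hqs'.symm hv hr hs
  · rcases RGraph.mem_edge_of_adj hps hu with hs | hs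
    · exact kite (by simp) (by simp) (by simp) hrs' hqr'.symm hqs'.symm hu hr hs
    · exact kite (by simp) (by simp) (by simp) hqs' hqr' hrs'.symm hv hq hs
  · exact kite (by simp) (by simp) (by simp) hqr' hqs' hrs' hv hq hr

theorem exists_isStrictTotalOrder_containsInducedCopy_clawGraph
    (h : ContainsCopy kiteGraph Gᶜ) :
    ∃ lt : V → V → Prop, IsStrictTotalOrder V lt ∧
      ContainsInducedCopy clawGraph (RGraph G lt) := by
  obtain ⟨a, b, c, d, e, hab, hac, hbc, hcd, hde, had, hae, hbd, hbe, hce⟩ :=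
    containsCopy_kiteGraph_iff.1 h
  obtain ⟨lt, hlt, hrank⟩ := exists_isStrictTotalOrder_of_rank fun v =>
    if v = e then 0 else if v = d then 1 else if v = c then 2 else 3
  have hed : lt e d := hrank _ _ (by simp [hde.ne])
  have hdc : lt d c := hrank _ _ (by simp [hde.ne, hce, hcd.ne])
  have hca : lt c a := hrank _ _ (by simp [hce, hcd.ne, hae, had, hac.ne])
  have hcb : lt c b := hrank _ _ (by simp [hce, hcd.ne, hbe, hbd, hbc.ne])
  let P : Arc G lt := ⟨(d, c), hdc, ((G.compl_adj _ _).1 hcd.symm).2⟩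
  let Q : Arc G lt := ⟨(c, a), hca, ((G.compl_adj _ _).1 hac.symm).2⟩
  let R : Arc G lt := ⟨(c, b), hcb, ((G.compl_adj _ _).1 hbc.symm).2⟩
  let S : Arc G lt := ⟨(e, d), hed, ((G.compl_adj _ _).1 hde.symm).2⟩
  refine ⟨lt, hlt, containsInducedCopy_clawGraph_iff.2 ⟨P, Q, R, S,
    RGraph.adj_of_snd_eq_fst rfl, RGraph.adj_of_snd_eq_fst rfl, (RGraph.adj_of_snd_eq_fst rfl).symm,
    RGraph.not_adj_of_fst_eq rfl ((G.compl_adj _ _).1 hab).2, RGraph.not_adj_of_disjoint ?_,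
    RGraph.not_adj_of_disjoint ?_, fun h => hab.ne (congrArg (·.1.2) h),
    fun h => hce (congrArg (·.1.1) h), fun h => hce (congrArg (·.1.1) h)⟩⟩
  · simp [Arc.edge, Q, S, hce, hcd.ne, hae, had]
  · simp [Arc.edge, R, S, hce, hcd.ne, hbe, hbd]

end CornazJost

theorem statement16_general {V : Type*} (G : SimpleGraph V) :
    (∀ lt : V → V → Prop, IsStrictTotalOrder V lt → ClawFree (RGraph G lt)) ↔
      ¬ ContainsCopy kiteGraph Gᶜ := by
  refine ⟨fun h hkite => ?_, fun hkite lt _ hclaw =>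
    hkite (containsCopy_kiteGraph_of_containsInducedCopy_clawGraph hclaw)⟩
  obtain ⟨lt, hlt, hclaw⟩ := exists_isStrictTotalOrder_containsInducedCopy_clawGraph hkite
  exact h lt hlt hclaw

/-- `R≺(G)` is claw-free for every linear order `≺` iff the complement of `G`
contains no kite as a subgraph. -/
theorem statement16 {V : Type*} [Fintype V] [DecidableEq V]
    (G : SimpleGraph V) [DecidableRel G.Adj] :
    (∀ lt : V → V → Prop, IsStrictTotalOrder V lt → ClawFree (RGraph G lt)) ↔
      ¬ ContainsCopy kiteGraph Gᶜ :=
  statement16_general G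
end
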